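/- ‖U Σ (I_k − ΣᵀΣ)⁻¹ Vᵀ − Û Σ̂ (I_k − Σ̂ᵀΣ̂)⁻¹ V̂ᵀ‖ ≤ 3‖X − X̂‖ / (1 − ‖X‖² − 2‖X̂ − X‖)². (Equivalently, Σ(I_k − ΣᵀΣ)⁻¹ is the p×k rectangular diagonal matrix with diagonal entries σ_i/(1 − σ_i²), and similarly for Σ̂.) -/

import Mathlib

open Matrix

noncomputable def specNorm {m n : Type*} [Fintype m] [Fintype n] [DecidableEq n]
    (A : Matrix m n ℝ) : ℝ :=
  ‖LinearMap.toContinuousLinearMap (Matrix.toEuclideanLin A)‖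

noncomputable def vnorm {n : Type*} [Fintype n] (v : n → ℝ) : ℝ :=
  Real.sqrt (∑ i, v i ^ 2)

/-!
By orthogonal invariance, `U Σ (I - ΣᵀΣ)⁻¹ Vᵀ = X (I - XᵀX)⁻¹` for any SVD `X = U Σ Vᵀ`, so
the claim is a perturbation bound for `f X = X (I - XᵀX)⁻¹`. With `A = I - XᵀX` and
`B = I - X̂ᵀX̂` one has `f X - f X̂ = (X - X̂) A⁻¹ + X̂ A⁻¹ (B - A) B⁻¹`, where
`‖B - A‖ ≤ (‖X‖ + ‖X̂‖) ‖X - X̂‖`, and the Neumann series bounds both `‖A⁻¹‖` and `‖B⁻¹‖` by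
`(1 - ‖X‖² - 2‖X̂ - X‖)⁻¹`.
-/

open scoped Matrix.Norms.L2Operator

theorem specNorm_eq_l2_opNorm {m n : Type*} [Fintype m] [Fintype n] [DecidableEq n]
    (A : Matrix m n ℝ) : specNorm A = ‖A‖ :=
  rfl

theorem CStarRing.norm_one_le {E : Type*} [NormedRing E] [StarRing E] [CStarRing E] :
    ‖(1 : E)‖ ≤ 1 := by
  nontriviality E
  exact CStarRing.norm_one.le

theorem NormedRing.norm_inverse_one_sub_le {R : Type*} [NormedRing R] [HasSummableGeomSeries R]
    (h1 : ‖(1 : R)‖ ≤ 1) {x : R} (hx : ‖x‖ < 1) : ‖Ring.inverse (1 - x)‖ ≤ (1 - ‖x‖)⁻¹ := by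
  rw [← geom_series_eq_inverse x hx]
  linarith [tsum_geometric_le_of_norm_lt_one x hx]

theorem sq_le_sq_add_two_mul_of_le_add {a b e : ℝ} (ha : 0 ≤ a) (hb₀ : 0 ≤ b) (he : 0 ≤ e)
    (hb : b ≤ a + e) (h : a ^ 2 + 2 * e < 1) : b ^ 2 ≤ a ^ 2 + 2 * e := by
  have ha1 : a ≤ 1 := by nlinarith
  -- `2 * a + e ≤ 2`, because `2 - 2 * a - e ≥ (1 - a) * (3 - a) / 2 ≥ 0`
  have hae : 2 * a + e ≤ 2 := by
    nlinarith [mul_nonneg (sub_nonneg.mpr ha1) (by linarith : (0 : ℝ) ≤ 3 - a)]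
  nlinarith [mul_self_le_mul_self hb₀ hb, mul_le_mul_of_nonneg_left hae he]

namespace Matrix

section CommRing

variable {α m n : Type*} [CommRing α] [Fintype n] [DecidableEq n]

theorem inv_mul_mul_transpose {V : Matrix n n α} (hV : Vᵀ * V = 1) (A : Matrix n n α) :
    (V * A * Vᵀ)⁻¹ = V * A⁻¹ * Vᵀ := by
  rw [mul_inv_rev, mul_inv_rev, inv_eq_left_inv hV, inv_eq_left_inv (mul_eq_one_comm.mp hV),
    Matrix.mul_assoc]

theorem mul_inv_sub_mul_inv (X Y : Matrix m n α) {A B : Matrix n n α} (h : IsUnit A ↔ IsUnit B) :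
    X * A⁻¹ - Y * B⁻¹ = (X - Y) * A⁻¹ + Y * (A⁻¹ * (B - A) * B⁻¹) := by
  rw [← inv_sub_inv h, Matrix.mul_sub, Matrix.sub_mul]
  abel

variable [Fintype m] [DecidableEq m]

theorem mul_mul_inv_one_sub_transpose_mul_self_mul_transpose {U : Matrix m m α}
    {V : Matrix n n α} (hU : Uᵀ * U = 1) (hV : Vᵀ * V = 1) (S : Matrix m n α) :
    U * (S * (1 - Sᵀ * S)⁻¹) * Vᵀ
      = U * S * Vᵀ * (1 - (U * S * Vᵀ)ᵀ * (U * S * Vᵀ))⁻¹ := by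
  have hgram : 1 - (U * S * Vᵀ)ᵀ * (U * S * Vᵀ) = V * (1 - Sᵀ * S) * Vᵀ := by
    simp only [transpose_mul, transpose_transpose, Matrix.mul_sub, Matrix.sub_mul,
      Matrix.mul_one, mul_eq_one_comm.mp hV, Matrix.mul_assoc]
    rw [← Matrix.mul_assoc Uᵀ U, hU, Matrix.one_mul]
  rw [hgram, inv_mul_mul_transpose hV]
  simp only [Matrix.mul_assoc]
  rw [← Matrix.mul_assoc Vᵀ V, hV, Matrix.one_mul]

end CommRing

section L2

variable {𝕜 m n : Type*} [RCLike 𝕜] [Fintype m] [Fintype n] [DecidableEq n]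

theorem l2_opNorm_inv_one_sub_le {M : Matrix n n 𝕜} (hM : ‖M‖ < 1) :
    ‖(1 - M)⁻¹‖ ≤ (1 - ‖M‖)⁻¹ := by
  rw [nonsing_inv_eq_ringInverse]
  exact NormedRing.norm_inverse_one_sub_le CStarRing.norm_one_le hM

theorem l2_opNorm_inv_one_sub_conjTranspose_mul_self_le {X : Matrix m n 𝕜} (hX : ‖X‖ ^ 2 < 1) :
    ‖(1 - Xᴴ * X)⁻¹‖ ≤ (1 - ‖X‖ ^ 2)⁻¹ := by
  have h := l2_opNorm_conjTranspose_mul_self X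
  rw [← sq] at h
  rw [← h] at hX ⊢
  exact l2_opNorm_inv_one_sub_le hX

theorem isUnit_one_sub_conjTranspose_mul_self {X : Matrix m n 𝕜} (hX : ‖X‖ ^ 2 < 1) :
    IsUnit (1 - Xᴴ * X) :=
  isUnit_one_sub_of_norm_lt_one (by rwa [l2_opNorm_conjTranspose_mul_self, ← sq])

variable [DecidableEq m]

theorem l2_opNorm_conjTranspose_mul_self_sub_le (X Y : Matrix m n 𝕜) :
    ‖Xᴴ * X - Yᴴ * Y‖ ≤ (‖X‖ + ‖Y‖) * ‖X - Y‖ := by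
  have h : Xᴴ * X - Yᴴ * Y = Xᴴ * (X - Y) + (X - Y)ᴴ * Y := by
    rw [conjTranspose_sub, Matrix.mul_sub, Matrix.sub_mul]; abel
  calc ‖Xᴴ * X - Yᴴ * Y‖ ≤ ‖Xᴴ‖ * ‖X - Y‖ + ‖(X - Y)ᴴ‖ * ‖Y‖ := by
        rw [h]; exact norm_add_le_of_le (l2_opNorm_mul _ _) (l2_opNorm_mul _ _)
    _ = (‖X‖ + ‖Y‖) * ‖X - Y‖ := by
        rw [l2_opNorm_conjTranspose, l2_opNorm_conjTranspose]; ring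

theorem l2_opNorm_mul_inv_one_sub_conjTranspose_mul_self_sub_le (X Y : Matrix m n 𝕜)
    (h : ‖X‖ ^ 2 + 2 * ‖Y - X‖ < 1) :
    ‖X * (1 - Xᴴ * X)⁻¹ - Y * (1 - Yᴴ * Y)⁻¹‖
      ≤ 3 * ‖X - Y‖ / (1 - ‖X‖ ^ 2 - 2 * ‖Y - X‖) ^ 2 := by
  set c := 1 - ‖X‖ ^ 2 - 2 * ‖Y - X‖ with hc_def
  have hc : 0 < c := by linarith
  have hc1 : c ≤ 1 := by linarith [norm_nonneg (Y - X), sq_nonneg ‖X‖]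
  rw [norm_sub_rev Y X] at h hc_def
  have hYX : ‖Y‖ ^ 2 ≤ ‖X‖ ^ 2 + 2 * ‖X - Y‖ :=
    sq_le_sq_add_two_mul_of_le_add (norm_nonneg X) (norm_nonneg Y) (norm_nonneg (X - Y))
      (norm_le_norm_add_norm_sub X Y) h
  have hX2 : ‖X‖ ^ 2 < 1 := by linarith [norm_nonneg (X - Y)]
  have hY2 : ‖Y‖ ^ 2 < 1 := hYX.trans_lt h
  have hA : ‖(1 - Xᴴ * X)⁻¹‖ ≤ c⁻¹ :=
    (l2_opNorm_inv_one_sub_conjTranspose_mul_self_le hX2).trans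
      (inv_anti₀ hc (by linarith [norm_nonneg (X - Y)]))
  have hB : ‖(1 - Yᴴ * Y)⁻¹‖ ≤ c⁻¹ :=
    (l2_opNorm_inv_one_sub_conjTranspose_mul_self_le hY2).trans (inv_anti₀ hc (by linarith))
  have hX1 : ‖X‖ ≤ 1 := by nlinarith [norm_nonneg X]
  have hY1 : ‖Y‖ ≤ 1 := by nlinarith [norm_nonneg Y]
  have hBA : ‖(1 - Yᴴ * Y) - (1 - Xᴴ * X)‖ ≤ 2 * ‖X - Y‖ := by
    rw [sub_sub_sub_cancel_left]
    nlinarith [l2_opNorm_conjTranspose_mul_self_sub_le X Y, norm_nonneg (X - Y)]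
  rw [mul_inv_sub_mul_inv X Y (iff_of_true (isUnit_one_sub_conjTranspose_mul_self hX2)
    (isUnit_one_sub_conjTranspose_mul_self hY2))]
  calc _ ≤ ‖X - Y‖ * ‖(1 - Xᴴ * X)⁻¹‖ + ‖Y‖ * (‖(1 - Xᴴ * X)⁻¹‖
          * ‖(1 - Yᴴ * Y) - (1 - Xᴴ * X)‖ * ‖(1 - Yᴴ * Y)⁻¹‖) := by
        refine norm_add_le_of_le (l2_opNorm_mul _ _) ((l2_opNorm_mul _ _).trans ?_)
        gcongr
        exact (l2_opNorm_mul _ _).trans (by gcongr; exact l2_opNorm_mul _ _)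
    _ ≤ ‖X - Y‖ * c⁻¹ + 1 * (c⁻¹ * (2 * ‖X - Y‖) * c⁻¹) := by gcongr
    _ ≤ 3 * ‖X - Y‖ / c ^ 2 := by
        have := mul_le_mul_of_nonneg_left ((one_le_inv₀ hc).mpr hc1)
          (mul_nonneg (norm_nonneg (X - Y)) (inv_nonneg.mpr hc.le))
        rw [div_eq_mul_inv, ← inv_pow, sq]
        linarith

end L2

end Matrix

theorem stmt_18_general
    (p k : ℕ)
    (X Xh : Matrix (Fin p) (Fin k) ℝ)
    (U Uh : Matrix (Fin p) (Fin p) ℝ) (V Vh : Matrix (Fin k) (Fin k) ℝ)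
    (hU : Uᵀ * U = 1) (hV : Vᵀ * V = 1) (hUh : Uhᵀ * Uh = 1) (hVh : Vhᵀ * Vh = 1)
    (σ σh : ℕ → ℝ)
    (hSVD : X = U * (Matrix.of fun (i : Fin p) (j : Fin k) =>
        if (i : ℕ) = (j : ℕ) then σ (i : ℕ) else 0) * Vᵀ)
    (hSVDh : Xh = Uh * (Matrix.of fun (i : Fin p) (j : Fin k) =>
        if (i : ℕ) = (j : ℕ) then σh (i : ℕ) else 0) * Vhᵀ)
    (hsmall : specNorm X ^ 2 + 2 * specNorm (Xh - X) < 1) :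
    specNorm
      (U * ((Matrix.of fun (i : Fin p) (j : Fin k) =>
              if (i : ℕ) = (j : ℕ) then σ (i : ℕ) else 0)
            * (1 - (Matrix.of fun (i : Fin p) (j : Fin k) =>
                if (i : ℕ) = (j : ℕ) then σ (i : ℕ) else 0)ᵀ
              * (Matrix.of fun (i : Fin p) (j : Fin k) =>
                if (i : ℕ) = (j : ℕ) then σ (i : ℕ) else 0))⁻¹) * Vᵀ
      - Uh * ((Matrix.of fun (i : Fin p) (j : Fin k) =>
              if (i : ℕ) = (j : ℕ) then σh (i : ℕ) else 0)
            * (1 - (Matrix.of fun (i : Fin p) (j : Fin k) =>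
                if (i : ℕ) = (j : ℕ) then σh (i : ℕ) else 0)ᵀ
              * (Matrix.of fun (i : Fin p) (j : Fin k) =>
                if (i : ℕ) = (j : ℕ) then σh (i : ℕ) else 0))⁻¹) * Vhᵀ)
      ≤ 3 * specNorm (X - Xh)
          / (1 - specNorm X ^ 2 - 2 * specNorm (Xh - X)) ^ 2 := by
  simp only [specNorm_eq_l2_opNorm] at hsmall ⊢
  rw [mul_mul_inv_one_sub_transpose_mul_self_mul_transpose hU hV,
    mul_mul_inv_one_sub_transpose_mul_self_mul_transpose hUh hVh, ← hSVD, ← hSVDh]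
  simpa only [conjTranspose_eq_transpose_of_trivial] using
    l2_opNorm_mul_inv_one_sub_conjTranspose_mul_self_sub_le X Xh hsmall

theorem stmt_18
    (p k : ℕ)
    (X Xh : Matrix (Fin p) (Fin k) ℝ)
    (U Uh : Matrix (Fin p) (Fin p) ℝ) (V Vh : Matrix (Fin k) (Fin k) ℝ)
    (hU : Uᵀ * U = 1) (hV : Vᵀ * V = 1) (hUh : Uhᵀ * Uh = 1) (hVh : Vhᵀ * Vh = 1)
    (σ σh : ℕ → ℝ)
    (hσanti : ∀ i j, i ≤ j → σ j ≤ σ i) (hσnonneg : ∀ i, 0 ≤ σ i)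
    (hσhanti : ∀ i j, i ≤ j → σh j ≤ σh i) (hσhnonneg : ∀ i, 0 ≤ σh i)
    (hSVD : X = U * (Matrix.of fun (i : Fin p) (j : Fin k) =>
        if (i : ℕ) = (j : ℕ) then σ (i : ℕ) else 0) * Vᵀ)
    (hSVDh : Xh = Uh * (Matrix.of fun (i : Fin p) (j : Fin k) =>
        if (i : ℕ) = (j : ℕ) then σh (i : ℕ) else 0) * Vhᵀ)
    (hX1 : specNorm X < 1) (hXh1 : specNorm Xh < 1)
    (hsmall : specNorm X ^ 2 + 2 * specNorm (Xh - X) < 1) :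
    specNorm
      (U * ((Matrix.of fun (i : Fin p) (j : Fin k) =>
              if (i : ℕ) = (j : ℕ) then σ (i : ℕ) else 0)
            * (1 - (Matrix.of fun (i : Fin p) (j : Fin k) =>
                if (i : ℕ) = (j : ℕ) then σ (i : ℕ) else 0)ᵀ
              * (Matrix.of fun (i : Fin p) (j : Fin k) =>
                if (i : ℕ) = (j : ℕ) then σ (i : ℕ) else 0))⁻¹) * Vᵀ
      - Uh * ((Matrix.of fun (i : Fin p) (j : Fin k) =>
              if (i : ℕ) = (j : ℕ) then σh (i : ℕ) else 0)
            * (1 - (Matrix.of fun (i : Fin p) (j : Fin k) =>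
                if (i : ℕ) = (j : ℕ) then σh (i : ℕ) else 0)ᵀ
              * (Matrix.of fun (i : Fin p) (j : Fin k) =>
                if (i : ℕ) = (j : ℕ) then σh (i : ℕ) else 0))⁻¹) * Vhᵀ)
      ≤ 3 * specNorm (X - Xh)
          / (1 - specNorm X ^ 2 - 2 * specNorm (Xh - X)) ^ 2 :=
  stmt_18_general p k X Xh U Uh V Vh hU hV hUh hVh σ σh hSVD hSVDh hsmall
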